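/- arXiv:2007.13636 — 2 statements merged into one kernel-verified Lean document; each statement's English description precedes it below -/
import Mathlib

section
/- Define the Callan polynomial C(n,k,x) := Σ_{j=0}^{min(n,k)} j! · (x+1)^{(j)} · S(n+1, j+1) · S(k+1, j+1), where S is the Stirling number of the second kind and (x+1)^{(j)} is the rising factorial. Then for all integers n ≥ 0 and m > k ≥ 0, Σ_{ℓ=0}^{m} (-1)^ℓ · c(m+1, ℓ+1) · C(n+ℓ, k, x) = 0 as a polynomial identity in x, where c denotes unsigned Stirling numbers of the first kind. -/
open Finset

/-- Stirling numbers of the second kind. -/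
def stirling2 : ℕ → ℕ → ℕ
  | 0, 0 => 1
  | 0, _ + 1 => 0
  | _ + 1, 0 => 0
  | n + 1, k + 1 => (k + 1) * stirling2 n (k + 1) + stirling2 n k

/-- Unsigned Stirling numbers of the first kind. -/
def stirling1 : ℕ → ℕ → ℕ
  | 0, 0 => 1
  | 0, _ + 1 => 0
  | _ + 1, 0 => 0
  | n + 1, k + 1 => n * stirling1 n (k + 1) + stirling1 n k

/-- The Callan polynomial, evaluated at x : ℚ. -/
def callan (n k : ℕ) (x : ℚ) : ℚ :=
  ∑ j ∈ Finset.range (min n k + 1),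
    (j.factorial : ℚ) * (∏ i ∈ Finset.range j, (x + 1 + i)) *
      stirling2 (n + 1) (j + 1) * stirling2 (k + 1) (j + 1)

/-! Since `∑ l, (-1)^l c(m+1, l+1) t^l = ∏_{i=1}^{m} (i - t)`, the functional
`Δ_m a = ∑ l, (-1)^l c(m+1, l+1) a l` applies the operator `∏_{i=1}^{m} (i - E)`, `E` the shift,
to `a` and reads off the value at `0`; in particular `Δ_{m+1} a = (m+1) Δ_m a - Δ_m (E a)`.
Together with `S(N+2, j+1) = (j+1) S(N+1, j+1) + S(N+1, j)` this shows by induction on `m` that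
`Δ_m` kills `l ↦ S(N+l+1, j+1)` for every `j < m`, and `l ↦ C(n+l, k, x)` is a combination of
these sequences with `j ≤ k < m`. -/

theorem stirling1_eq_stirlingFirst : stirling1 = Nat.stirlingFirst := by
  funext n k
  induction n generalizing k with
  | zero => cases k <;> rfl
  | succ n ih => cases k <;> simp [stirling1, Nat.stirlingFirst, ih]

theorem stirling2_eq_stirlingSecond : stirling2 = Nat.stirlingSecond := by
  funext n k
  induction n generalizing k with
  | zero => cases k <;> rfl
  | succ n ih => cases k <;> simp [stirling2, Nat.stirlingSecond, ih]

theorem stirling1_eq_zero_of_lt {n k : ℕ} (h : n < k) : stirling1 n k = 0 :=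
  stirling1_eq_stirlingFirst ▸ Nat.stirlingFirst_eq_zero_of_lt h

theorem stirling2_eq_zero_of_lt {n k : ℕ} (h : n < k) : stirling2 n k = 0 :=
  stirling2_eq_stirlingSecond ▸ Nat.stirlingSecond_eq_zero_of_lt h

section Transform

variable (R : Type*) [CommRing R]

def stirling1Transform (m : ℕ) : (ℕ → R) →ₗ[R] R where
  toFun a := ∑ l ∈ range (m + 1), (-1) ^ l * stirling1 (m + 1) (l + 1) * a l
  map_add' a b := by simp only [Pi.add_apply, mul_add, sum_add_distrib]
  map_smul' c a := by
    simp only [Pi.smul_apply, smul_eq_mul, RingHom.id_apply, mul_sum]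
    exact sum_congr rfl fun _ _ => by ring

variable {R}

theorem stirling1Transform_apply (m : ℕ) (a : ℕ → R) :
    stirling1Transform R m a
      = ∑ l ∈ range (m + 1), (-1) ^ l * stirling1 (m + 1) (l + 1) * a l := rfl

theorem stirling1Transform_succ (m : ℕ) (a : ℕ → R) :
    stirling1Transform R (m + 1) a
      = (m + 1) * stirling1Transform R m a - stirling1Transform R m (fun l => a (l + 1)) := by
  have hrec (l : ℕ) : (stirling1 (m + 2) (l + 1) : R)
      = (m + 1) * stirling1 (m + 1) (l + 1) + stirling1 (m + 1) l := by
    simp [stirling1]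
  have htop : ∑ l ∈ range (m + 2), (-1) ^ l * (stirling1 (m + 1) (l + 1) : R) * a l
      = stirling1Transform R m a := by
    rw [sum_range_succ, stirling1_eq_zero_of_lt (Nat.lt_succ_self (m + 1)), Nat.cast_zero,
      mul_zero, zero_mul, add_zero, stirling1Transform_apply]
  have hshift : ∑ l ∈ range (m + 2), (-1) ^ l * (stirling1 (m + 1) l : R) * a l
      = -stirling1Transform R m (fun l => a (l + 1)) := by
    rw [sum_range_succ', stirling1Transform_apply, ← sum_neg_distrib]
    simp only [stirling1, Nat.cast_zero, mul_zero, zero_mul, add_zero, pow_succ]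
    exact sum_congr rfl fun _ _ => by ring
  calc stirling1Transform R (m + 1) a
      = (m + 1) * ∑ l ∈ range (m + 2), (-1) ^ l * (stirling1 (m + 1) (l + 1) : R) * a l
          + ∑ l ∈ range (m + 2), (-1) ^ l * (stirling1 (m + 1) l : R) * a l := by
        rw [stirling1Transform_apply, mul_sum, ← sum_add_distrib]
        exact sum_congr rfl fun l _ => by rw [hrec]; ring
    _ = _ := by rw [htop, hshift, sub_eq_add_neg]

theorem stirling2_shift (N j : ℕ) :
    (fun l => (stirling2 (N + (l + 1) + 1) (j + 1) : R))
      = (j + 1 : R) • (fun l => (stirling2 (N + l + 1) (j + 1) : R))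
        + fun l => (stirling2 (N + l + 1) j : R) := by
  funext l
  simp [← add_assoc, stirling2]

theorem stirling1Transform_stirling2 {m j : ℕ} (hj : j < m) (N : ℕ) :
    stirling1Transform R m (fun l => (stirling2 (N + l + 1) (j + 1) : R)) = 0 := by
  induction m generalizing j N with
  | zero => omega
  | succ m ih =>
    have hlow : stirling1Transform R m (fun l => (stirling2 (N + l + 1) j : R)) = 0 := by
      cases j with
      | zero => simp only [stirling2, Nat.cast_zero]; exact map_zero (stirling1Transform R m)
      | succ i => exact ih (by omega) N
    have hdiag : ((m : R) - j) * stirling1Transform R m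
        (fun l => (stirling2 (N + l + 1) (j + 1) : R)) = 0 := by
      rcases (Nat.lt_succ_iff.mp hj).lt_or_eq with hjm | rfl
      · rw [ih hjm, mul_zero]
      · rw [sub_self, zero_mul]
    rw [stirling1Transform_succ, stirling2_shift, map_add, map_smul, hlow, smul_eq_mul]
    linear_combination hdiag

end Transform

theorem callan_eq_sum_range (n k : ℕ) (x : ℚ) :
    callan n k x = ∑ j ∈ range (k + 1), (j.factorial : ℚ) * (∏ i ∈ range j, (x + 1 + i)) *
      stirling2 (n + 1) (j + 1) * stirling2 (k + 1) (j + 1) := by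
  refine sum_subset (range_subset_range.mpr (by omega)) fun j hjk hjn => ?_
  rw [stirling2_eq_zero_of_lt (by simp at hjk hjn; omega), Nat.cast_zero, mul_zero, zero_mul]

theorem stmt4 (n k m : ℕ) (hk : k < m) (x : ℚ) :
    ∑ l ∈ Finset.range (m + 1),
      (-1 : ℚ) ^ l * stirling1 (m + 1) (l + 1) * callan (n + l) k x = 0 := by
  have hcallan : (fun l => callan (n + l) k x) = ∑ j ∈ range (k + 1),
      ((j.factorial : ℚ) * (∏ i ∈ range j, (x + 1 + i)) * stirling2 (k + 1) (j + 1)) •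
        fun l => (stirling2 (n + l + 1) (j + 1) : ℚ) := by
    funext l
    simp only [callan_eq_sum_range, Finset.sum_apply, Pi.smul_apply, smul_eq_mul]
    exact sum_congr rfl fun _ _ => by ring
  change stirling1Transform ℚ m (fun l => callan (n + l) k x) = 0
  rw [hcallan, map_sum]
  refine sum_eq_zero fun j hj => ?_
  rw [map_smul, stirling1Transform_stirling2 (by simp at hj; omega), smul_zero]
end

section
/- Define the m-barred Callan number recursively counted quantity C(n,k,m) := Σ_{r=0}^{min(n,k)} binom(r+m, m)·(r!)²·S(n+1, r+1)·S(k+1, r+1) with C(n,0,m) = C(0,k,m) = 1. Then for all integers n ≥ 0, k > 0, and m ≥ 0: C(n,k,m) = C(n, k-1, m) + Σ_{j=1}^{n} binom(n,j)·C(n-j+1, k-1, m) + m·Σ_{j=1}^{n} binom(n,j)·C(n-j, k-1, m). -/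
/-!
Write `C(n,k,m) = ∑_r w_r S(n+1,r+1) S(k+1,r+1)` with `w_r = binom(r+m,m) (r!)²`. On the left,
the recurrence `S(k+2,r+1) = (r+1) S(k+1,r+1) + S(k+1,r)` followed by the shift `r ↦ r+1`, using
`w_{r+1} = (r+1)(r+m+1) w_r`, expands `C(n,k+1,m)` in the basis `w_r S(k+1,r+1)`. On the right,
the sums over `j` collapse by `∑_i binom(n,i) S(i,t) = S(n+1,t+1)`, and the coefficients agree:
`(r+1) S(n+1,r+1) + (r+1)(r+m+1) S(n+1,r+2)` on both sides.
-/

open Finset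

/-- The number of m-barred Callan sequences of size n × k. -/
def barredCallan (n k m : ℕ) : ℕ :=
  ∑ r ∈ Finset.range (min n k + 1),
    (r + m).choose m * r.factorial ^ 2 * stirling2 (n + 1) (r + 1) * stirling2 (k + 1) (r + 1)

namespace Nat

theorem sum_mul_stirlingSecond_succ_succ (s : Finset ℕ) (c g : ℕ → ℕ) (k : ℕ) :
    ∑ i ∈ s, c i * stirlingSecond (g i + 1) (k + 1) =
      (k + 1) * ∑ i ∈ s, c i * stirlingSecond (g i) (k + 1) +
        ∑ i ∈ s, c i * stirlingSecond (g i) k := by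
  simp only [stirlingSecond_succ_succ, mul_add, sum_add_distrib, mul_sum, mul_left_comm]

theorem sum_range_choose_mul_stirlingSecond (n k : ℕ) :
    ∑ i ∈ range (n + 1), n.choose i * stirlingSecond i k = stirlingSecond (n + 1) (k + 1) := by
  induction n generalizing k with
  | zero => cases k <;> rfl
  | succ n ih =>
    have pascal := sum_choose_succ_nsmul (fun i _ => stirlingSecond i k) n
    simp only [smul_eq_mul] at pascal
    rw [pascal, ih, stirlingSecond_succ_succ (n + 1)]
    cases k with
    | zero => simp [stirlingSecond_one_right]
    | succ k => rw [sum_mul_stirlingSecond_succ_succ, ih, ih]; ring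

theorem sum_range_choose_mul_stirlingSecond_succ (n k : ℕ) :
    ∑ i ∈ range n, n.choose i * stirlingSecond (i + 1) k = k * stirlingSecond (n + 1) (k + 1) := by
  cases k with
  | zero => simp
  | succ k =>
    have full := sum_mul_stirlingSecond_succ_succ (range (n + 1)) n.choose id k
    simp only [id_eq] at full
    rw [sum_range_choose_mul_stirlingSecond, sum_range_choose_mul_stirlingSecond,
      sum_range_succ, choose_self, one_mul] at full
    omega

theorem sum_range_choose_mul_stirlingSecond_add_two (n k : ℕ) :
    ∑ i ∈ range n, n.choose i * stirlingSecond (i + 2) (k + 1) =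
      k * stirlingSecond (n + 1) (k + 1) + (k + 1) ^ 2 * stirlingSecond (n + 1) (k + 2) := by
  rw [sum_mul_stirlingSecond_succ_succ, sum_range_choose_mul_stirlingSecond_succ,
    sum_range_choose_mul_stirlingSecond_succ]
  ring

end Nat

theorem sum_Icc_choose_mul_sub (n : ℕ) (f : ℕ → ℕ) :
    ∑ j ∈ Icc 1 n, n.choose j * f (n - j) = ∑ i ∈ range n, n.choose i * f i := by
  refine sum_nbij' (n - ·) (n - ·) ?_ ?_ ?_ ?_ ?_ <;> intro i hi <;>
    simp only [mem_Icc, mem_range] at hi ⊢ <;> try omega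
  rw [Nat.choose_symm hi.2]

def callanWeight (m r : ℕ) : ℕ := (r + m).choose m * r.factorial ^ 2

theorem callanWeight_succ (m r : ℕ) :
    callanWeight m (r + 1) = callanWeight m r * ((r + 1) * (r + m + 1)) := by
  have h := Nat.choose_mul_succ_eq (r + m) m
  rw [show r + m + 1 - m = r + 1 by omega] at h
  simp only [callanWeight, Nat.factorial_succ, show r + 1 + m = r + m + 1 by omega]
  linear_combination (r + 1) * r.factorial ^ 2 * h.symm

theorem barredCallan_eq_sum_range (a b m N : ℕ) (h : min a b ≤ N) :
    barredCallan a b m = ∑ r ∈ range (N + 1),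
      callanWeight m r * Nat.stirlingSecond (a + 1) (r + 1) * Nat.stirlingSecond (b + 1) (r + 1) := by
  rw [barredCallan, stirling2_eq_stirlingSecond]
  refine sum_subset (range_subset_range.2 (by omega)) fun r hr hr' => ?_
  simp only [mem_range] at hr hr'
  rcases min_lt_iff.1 (show min a b < r by omega) with hlt | hlt
  · rw [Nat.stirlingSecond_eq_zero_of_lt (show a + 1 < r + 1 by omega)]; simp
  · rw [Nat.stirlingSecond_eq_zero_of_lt (show b + 1 < r + 1 by omega)]; simp

theorem barredCallan_succ_right (n k m : ℕ) :
    barredCallan n (k + 1) m = ∑ r ∈ range (n + 1),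
      callanWeight m r * Nat.stirlingSecond (k + 1) (r + 1) *
        ((r + 1) * Nat.stirlingSecond (n + 1) (r + 1) +
          (r + 1) * (r + m + 1) * Nat.stirlingSecond (n + 1) (r + 2)) := by
  have shift : ∑ r ∈ range (n + 1),
      callanWeight m r * Nat.stirlingSecond (n + 1) (r + 1) * Nat.stirlingSecond (k + 1) r =
        ∑ r ∈ range (n + 1), callanWeight m r * Nat.stirlingSecond (k + 1) (r + 1) *
          ((r + 1) * (r + m + 1) * Nat.stirlingSecond (n + 1) (r + 2)) := by
    rw [sum_range_succ', sum_range_succ, Nat.stirlingSecond_succ_zero,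
      Nat.stirlingSecond_eq_zero_of_lt (by omega : n + 1 < n + 2)]
    simp only [mul_zero, add_zero]
    exact sum_congr rfl fun r _ => by rw [callanWeight_succ]; ring
  calc barredCallan n (k + 1) m
      = ∑ r ∈ range (n + 1), callanWeight m r * Nat.stirlingSecond (n + 1) (r + 1) *
          Nat.stirlingSecond (k + 1 + 1) (r + 1) :=
        barredCallan_eq_sum_range n (k + 1) m n (min_le_left _ _)
    _ = ∑ r ∈ range (n + 1), callanWeight m r * Nat.stirlingSecond (k + 1) (r + 1) *
          ((r + 1) * Nat.stirlingSecond (n + 1) (r + 1)) +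
        ∑ r ∈ range (n + 1),
          callanWeight m r * Nat.stirlingSecond (n + 1) (r + 1) * Nat.stirlingSecond (k + 1) r := by
      rw [← sum_add_distrib]
      exact sum_congr rfl fun r _ => by rw [Nat.stirlingSecond_succ_succ (k + 1)]; ring
    _ = _ := by
      rw [shift, ← sum_add_distrib]
      exact sum_congr rfl fun r _ => by ring

theorem sum_Icc_choose_mul_barredCallan (n k m : ℕ) (f : ℕ → ℕ) (hf : ∀ i < n, f i ≤ n) :
    ∑ j ∈ Icc 1 n, n.choose j * barredCallan (f (n - j)) k m =
      ∑ r ∈ range (n + 1), callanWeight m r * Nat.stirlingSecond (k + 1) (r + 1) *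
        ∑ i ∈ range n, n.choose i * Nat.stirlingSecond (f i + 1) (r + 1) := by
  rw [sum_Icc_choose_mul_sub n (fun i => barredCallan (f i) k m)]
  calc ∑ i ∈ range n, n.choose i * barredCallan (f i) k m
      = ∑ i ∈ range n, ∑ r ∈ range (n + 1), n.choose i * (callanWeight m r *
          Nat.stirlingSecond (f i + 1) (r + 1) * Nat.stirlingSecond (k + 1) (r + 1)) :=
        sum_congr rfl fun i hi => by
          rw [barredCallan_eq_sum_range _ _ _ n (min_le_of_left_le (hf i (mem_range.1 hi))),
            mul_sum]
    _ = _ := by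
      rw [sum_comm]
      simp_rw [mul_sum]
      exact sum_congr rfl fun r _ => sum_congr rfl fun i _ => by ring

theorem stmt19 (n k m : ℕ) (hk : 0 < k) :
    barredCallan n k m =
      barredCallan n (k - 1) m
        + ∑ j ∈ Finset.Icc 1 n, n.choose j * barredCallan (n - j + 1) (k - 1) m
        + m * ∑ j ∈ Finset.Icc 1 n, n.choose j * barredCallan (n - j) (k - 1) m := by
  obtain ⟨k, rfl⟩ := Nat.exists_eq_add_one_of_ne_zero hk.ne'
  rw [Nat.add_sub_cancel, barredCallan_succ_right,
    sum_Icc_choose_mul_barredCallan n k m (· + 1) fun _ h => h,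
    sum_Icc_choose_mul_barredCallan n k m (fun i => i) fun _ h => h.le,
    barredCallan_eq_sum_range n k m n (min_le_left _ _), mul_sum, ← sum_add_distrib,
    ← sum_add_distrib]
  refine sum_congr rfl fun r _ => ?_
  simp only [Nat.sum_range_choose_mul_stirlingSecond_succ,
    Nat.sum_range_choose_mul_stirlingSecond_add_two]
  ring
end
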